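/- With G, E = ℤ^ν, τ, and φ : G → GL_ν(ℚ) ⋉ ℚ^ν as above, and N = ker m the kernel of the modular homomorphism, the image φ(N) equals the subgroup H = ⋁_{n∈ℤ} τⁿ(E) of ℚ^ν generated by all τⁿ(E), n ∈ ℤ. -/

import Mathlib

/-!
The modular map `m` of `E` is multiplicative on the commensurator of `E`, which is all of `G`
because `G` is generated by `E` and `t`. Since `m` is trivial on `E` and `m(t) = r` with
`r = [E : E₊] / [E : E₋] ≠ 1`, we get `m = r^deg`, where `deg : G → ℤ` is the exponent sum of `t`.
So `N = ker deg`, which is generated by the conjugates `tⁿ a t⁻ⁿ` (`a ∈ E`), and `φ` sends these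
to `Tⁿ(a)`.
-/

open HNNExtension Multiplicative

/-- The conjugate subgroup `gEg⁻¹`. -/
def conjSubgroup {G : Type*} [Group G] (g : G) (E : Subgroup G) : Subgroup G :=
  E.map (MulAut.conj g).toMonoidHom

/-- The modular map `m(g) = [E : E ∩ gEg⁻¹] / [gEg⁻¹ : E ∩ gEg⁻¹]`. -/
noncomputable def modularMap {G : Type*} [Group G] (E : Subgroup G) (g : G) : ℚ :=
  ((conjSubgroup g E).relIndex E : ℚ) / (E.relIndex (conjSubgroup g E) : ℚ)

/-- The action of `GL_ν(ℚ)` on `ℚ^ν` (written multiplicatively). -/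
def glAct (ν : ℕ) :
    ((Fin ν → ℚ) ≃ₗ[ℚ] (Fin ν → ℚ)) →* MulAut (Multiplicative (Fin ν → ℚ)) :=
  MonoidHom.mk' (fun T => AddEquiv.toMultiplicative T.toAddEquiv) (by intro a b; rfl)

/-- The embedding `ℤ^ν → ℚ^ν`. -/
def intEmb (ν : ℕ) : Multiplicative (Fin ν → ℤ) →* Multiplicative (Fin ν → ℚ) :=
  MonoidHom.mk' (fun a => Multiplicative.ofAdd fun i => ((a.toAdd i : ℤ) : ℚ))
    (by
      intro a b
      rw [← ofAdd_add]
      funext i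
      exact Int.cast_add _ _)

open scoped Pointwise

namespace Subgroup

variable {G : Type*} [Group G]

theorem commensurable_of_le {A B C : Subgroup G} (hCA : C ≤ A) (hCB : C ≤ B)
    (hA : C.relIndex A ≠ 0) (hB : C.relIndex B ≠ 0) : Commensurable A B :=
  ⟨mt (relIndex_eq_zero_of_le_left hCA) hB, mt (relIndex_eq_zero_of_le_left hCB) hA⟩

/-- `[A : A ⊓ B] / [B : A ⊓ B]` -/
noncomputable def relIndexRatio (A B : Subgroup G) : ℚ :=
  (B.relIndex A : ℚ) / (A.relIndex B : ℚ)

theorem relIndexRatio_self (A : Subgroup G) : relIndexRatio A A = 1 := by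
  simp [relIndexRatio]

theorem relIndexRatio_symm (A B : Subgroup G) : relIndexRatio B A = (relIndexRatio A B)⁻¹ :=
  (inv_div _ _).symm

theorem relIndexRatio_smul {H : Type*} [Group H] [MulDistribMulAction H G] (h : H)
    (A B : Subgroup G) : relIndexRatio (h • A) (h • B) = relIndexRatio A B := by
  simp only [relIndexRatio, relIndex_pointwise_smul]

theorem relIndexRatio_eq_of_le {A B C : Subgroup G} (hCA : C ≤ A) (hCB : C ≤ B)
    (hA : C.relIndex A ≠ 0) :
    relIndexRatio A B = (C.relIndex A : ℚ) / (C.relIndex B : ℚ) := by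
  have hA' := relIndex_mul_relIndex C (A ⊓ B) A (le_inf hCA hCB) inf_le_left
  have hB' := relIndex_mul_relIndex C (A ⊓ B) B (le_inf hCA hCB) inf_le_right
  rw [inf_relIndex_left] at hA'
  rw [inf_relIndex_right] at hB'
  have hC : (C.relIndex (A ⊓ B) : ℚ) ≠ 0 :=
    Nat.cast_ne_zero.2 fun h => hA (by rw [← hA', h, zero_mul])
  rw [relIndexRatio, ← hA', ← hB', Nat.cast_mul, Nat.cast_mul, mul_div_mul_left _ _ hC]

theorem relIndexRatio_mul_relIndexRatio {A B C : Subgroup G} (hAB : Commensurable A B)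
    (hBC : Commensurable B C) :
    relIndexRatio A B * relIndexRatio B C = relIndexRatio A C := by
  set D := A ⊓ B ⊓ C
  have hDA : D ≤ A := inf_le_left.trans inf_le_left
  have hDB : D ≤ B := inf_le_left.trans inf_le_right
  have hDC : D ≤ C := inf_le_right
  have hA : D.relIndex A ≠ 0 :=
    relIndex_inf_ne_zero (by rw [inf_relIndex_left]; exact hAB.2) (hAB.trans hBC).2
  have hB : D.relIndex B ≠ 0 :=
    relIndex_inf_ne_zero (by rw [inf_relIndex_right]; exact hAB.1) hBC.2
  have hB' : (D.relIndex B : ℚ) ≠ 0 := Nat.cast_ne_zero.2 hB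
  rw [relIndexRatio_eq_of_le hDA hDB hA, relIndexRatio_eq_of_le hDB hDC hB,
    relIndexRatio_eq_of_le hDA hDC hA, div_mul_div_cancel₀ hB']

end Subgroup

open Subgroup

section Modular

variable {G : Type*} [Group G] (E : Subgroup G)

theorem conjSubgroup_eq_smul (g : G) : conjSubgroup g E = ConjAct.toConjAct g • E := by
  ext x
  simp [conjSubgroup, mem_smul_pointwise_iff_exists, ConjAct.toConjAct_smul]

theorem modularMap_eq_relIndexRatio (g : G) :
    modularMap E g = relIndexRatio E (ConjAct.toConjAct g • E) := by
  rw [modularMap, conjSubgroup_eq_smul]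
  rfl

theorem modularMap_eq_one_of_mem {g : G} (hg : g ∈ E) : modularMap E g = 1 := by
  rw [modularMap_eq_relIndexRatio, conjAct_pointwise_smul_eq_self (le_normalizer hg),
    relIndexRatio_self]

theorem modularMap_inv (g : G) : modularMap E g⁻¹ = (modularMap E g)⁻¹ := by
  rw [modularMap_eq_relIndexRatio, modularMap_eq_relIndexRatio, ← relIndexRatio_symm,
    ← relIndexRatio_smul (ConjAct.toConjAct g), map_inv, smul_inv_smul]

theorem modularMap_mul {g h : G} (hg : g ∈ Commensurable.commensurator E)
    (hh : h ∈ Commensurable.commensurator E) :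
    modularMap E (g * h) = modularMap E g * modularMap E h := by
  simp only [modularMap_eq_relIndexRatio, map_mul, mul_smul]
  rw [← relIndexRatio_smul (ConjAct.toConjAct g) E (ConjAct.toConjAct h • E)]
  exact (relIndexRatio_mul_relIndexRatio hg.symm (hh.symm.conj _)).symm

end Modular

namespace HNNExtension

variable {G : Type*} [Group G] {A B : Subgroup G} (φ : A ≃* B)

theorem relIndex_map_of_range (H : Subgroup G) :
    (H.map (of : G →* HNNExtension G A B φ)).relIndex (of : G →* HNNExtension G A B φ).range =
      H.index := by
  rw [MonoidHom.range_eq_map, relIndex_map_map_of_injective _ _ (of_injective φ),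
    relIndex_top_right]

theorem toConjAct_t_smul_map_of :
    ConjAct.toConjAct (t : HNNExtension G A B φ) • A.map (of (φ := φ)) = B.map (of (φ := φ)) := by
  rw [← conjSubgroup_eq_smul]
  ext x
  simp only [conjSubgroup, mem_map, MulEquiv.coe_toMonoidHom, MulAut.conj_apply]
  constructor
  · rintro ⟨_, ⟨a, ha, rfl⟩, rfl⟩
    exact ⟨φ ⟨a, ha⟩, (φ ⟨a, ha⟩).2, equiv_eq_conj (φ := φ) ⟨a, ha⟩⟩
  · rintro ⟨b, hb, rfl⟩
    refine ⟨_, ⟨φ.symm ⟨b, hb⟩, (φ.symm ⟨b, hb⟩).2, rfl⟩, ?_⟩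
    rw [← equiv_eq_conj, MulEquiv.apply_symm_apply]

theorem map_of_le_toConjAct_t_smul_range :
    B.map (of (φ := φ)) ≤ ConjAct.toConjAct (t : HNNExtension G A B φ) • (of : G →* _).range := by
  rw [← toConjAct_t_smul_map_of]
  exact pointwise_smul_le_pointwise_smul_iff.2 (map_le_range _ _)

theorem relIndex_map_of_toConjAct_t_smul_range :
    (B.map (of (φ := φ))).relIndex
      (ConjAct.toConjAct (t : HNNExtension G A B φ) • (of : G →* _).range) = A.index := by
  rw [← toConjAct_t_smul_map_of, relIndex_pointwise_smul, relIndex_map_of_range]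

theorem t_mem_commensurator (hA : A.index ≠ 0) (hB : B.index ≠ 0) :
    (t : HNNExtension G A B φ) ∈ Commensurable.commensurator (of : G →* _).range := by
  rw [Commensurable.commensurator_mem_iff]
  exact commensurable_of_le (map_of_le_toConjAct_t_smul_range φ) (map_le_range _ _)
    (by rwa [relIndex_map_of_toConjAct_t_smul_range]) (by rwa [relIndex_map_of_range])

theorem modularMap_range_of_t (hB : B.index ≠ 0) :
    modularMap (of : G →* HNNExtension G A B φ).range t = (B.index : ℚ) / A.index := by
  rw [modularMap_eq_relIndexRatio,
    relIndexRatio_eq_of_le (map_le_range _ _) (map_of_le_toConjAct_t_smul_range φ)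
      (by rwa [relIndex_map_of_range]),
    relIndex_map_of_range, relIndex_map_of_toConjAct_t_smul_range]

theorem commensurator_range_of (hA : A.index ≠ 0) (hB : B.index ≠ 0) :
    Commensurable.commensurator (of : G →* HNNExtension G A B φ).range = ⊤ := by
  refine (eq_top_iff' _).2 fun g => ?_
  induction g using induction_on with
  | of a =>
    rw [Commensurable.commensurator_mem_iff,
      conjAct_pointwise_smul_eq_self (le_normalizer (MonoidHom.mem_range.2 ⟨a, rfl⟩))]
  | t => exact t_mem_commensurator φ hA hB
  | mul x y hx hy => exact mul_mem hx hy
  | inv x hx => exact inv_mem hx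

def tDegree : HNNExtension G A B φ →* Multiplicative ℤ :=
  lift 1 (ofAdd 1) fun _ => by simp

@[simp]
theorem tDegree_of (g : G) : tDegree φ (of g) = 1 := by
  simp [tDegree]

@[simp]
theorem tDegree_t : tDegree φ t = ofAdd 1 := by
  simp [tDegree]

theorem modularMap_range_of_eq_zpow (hA : A.index ≠ 0) (hB : B.index ≠ 0)
    (g : HNNExtension G A B φ) :
    modularMap (of : G →* HNNExtension G A B φ).range g =
      ((B.index : ℚ) / A.index) ^ toAdd (tDegree φ g) := by
  have hr : (B.index : ℚ) / A.index ≠ 0 := by positivity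
  have hcomm := commensurator_range_of φ hA hB
  induction g using induction_on with
  | of a => simp [modularMap_eq_one_of_mem _ (MonoidHom.mem_range.2 ⟨a, rfl⟩)]
  | t => simp [modularMap_range_of_t φ hB]
  | mul x y hx hy =>
    rw [modularMap_mul _ (hcomm ▸ mem_top x) (hcomm ▸ mem_top y), hx, hy, map_mul, toAdd_mul,
      zpow_add₀ hr]
  | inv x hx => rw [modularMap_inv, hx, map_inv, toAdd_inv, zpow_neg]

def tConjugates : Set (HNNExtension G A B φ) :=
  {x | ∃ (n : ℤ) (g : G), x = t ^ n * of g * (t ^ n)⁻¹}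

theorem zpow_t_conj_mem_closure_tConjugates (m : ℤ) {x : HNNExtension G A B φ}
    (hx : x ∈ closure (tConjugates φ)) : t ^ m * x * (t ^ m)⁻¹ ∈ closure (tConjugates φ) := by
  have hle : (closure (tConjugates φ)).map (MulAut.conj (t ^ m)).toMonoidHom ≤
      closure (tConjugates φ) := by
    rw [MonoidHom.map_closure]
    refine closure_mono ?_
    rintro _ ⟨_, ⟨n, g, rfl⟩, rfl⟩
    exact ⟨m + n, g, by simp only [MulEquiv.coe_toMonoidHom, MulAut.conj_apply, zpow_add]; group⟩
  exact hle ⟨x, hx, rfl⟩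

theorem exists_mem_closure_tConjugates_mul_zpow_t (g : HNNExtension G A B φ) :
    ∃ k ∈ closure (tConjugates φ), g = k * t ^ toAdd (tDegree φ g) := by
  induction g using induction_on with
  | of a => exact ⟨of a, subset_closure ⟨0, a, by simp⟩, by simp⟩
  | t => exact ⟨1, one_mem _, by simp⟩
  | mul x y hx hy =>
    obtain ⟨k, hk, hx⟩ := hx
    obtain ⟨l, hl, hy⟩ := hy
    rw [map_mul, toAdd_mul, zpow_add]
    generalize toAdd (tDegree φ x) = m at hx ⊢
    generalize toAdd (tDegree φ y) = n at hy ⊢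
    subst hx hy
    exact ⟨k * (t ^ m * l * (t ^ m)⁻¹),
      mul_mem hk (zpow_t_conj_mem_closure_tConjugates φ m hl), by group⟩
  | inv x hx =>
    obtain ⟨k, hk, hx⟩ := hx
    rw [map_inv, toAdd_inv]
    generalize toAdd (tDegree φ x) = m at hx ⊢
    subst hx
    exact ⟨t ^ (-m) * k⁻¹ * (t ^ (-m))⁻¹,
      zpow_t_conj_mem_closure_tConjugates φ _ (inv_mem hk), by group⟩

theorem ker_tDegree : (tDegree φ).ker = closure (tConjugates φ) := by
  refine le_antisymm (fun g hg => ?_) ((closure_le _).2 ?_)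
  · obtain ⟨k, hk, hgk⟩ := exists_mem_closure_tConjugates_mul_zpow_t φ g
    rw [(MonoidHom.mem_ker).1 hg, toAdd_one, zpow_zero, mul_one] at hgk
    exact hgk ▸ hk
  · rintro _ ⟨n, g, rfl⟩
    simp

theorem modularMap_range_of_eq_one_iff (hA : A.index ≠ 0) (hB : B.index ≠ 0)
    (hAB : A.index ≠ B.index) {g : HNNExtension G A B φ} :
    modularMap (of : G →* HNNExtension G A B φ).range g = 1 ↔ g ∈ closure (tConjugates φ) := by
  have hr : 0 < (B.index : ℚ) / A.index := by positivity
  have hr1 : (B.index : ℚ) / A.index ≠ 1 := by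
    rw [Ne, div_eq_one_iff_eq (by positivity), Nat.cast_inj]
    exact hAB.symm
  rw [← ker_tDegree, MonoidHom.mem_ker, modularMap_range_of_eq_zpow φ hA hB,
    zpow_eq_one_iff_right₀ hr.le hr1, toAdd_eq_zero]

end HNNExtension

theorem image_ker_modular_eq_general (ν : ℕ)
    (Em Ep : Subgroup (Multiplicative (Fin ν → ℤ)))
    (hEm : Em.index ≠ 0) (hEp : Ep.index ≠ 0) (hpq : Em.index ≠ Ep.index)
    (τ : Em ≃* Ep)
    (T : (Fin ν → ℚ) ≃ₗ[ℚ] (Fin ν → ℚ))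
    (Φ : HNNExtension (Multiplicative (Fin ν → ℤ)) Em Ep τ →*
        (Multiplicative (Fin ν → ℚ)) ⋊[glAct ν] ((Fin ν → ℚ) ≃ₗ[ℚ] (Fin ν → ℚ)))
    (hΦof : ∀ a : Multiplicative (Fin ν → ℤ),
      Φ (HNNExtension.of a) = SemidirectProduct.inl (intEmb ν a))
    (hΦt : Φ HNNExtension.t = SemidirectProduct.inr T) :
    Φ '' {g | modularMap (HNNExtension.of (φ := τ)).range g = 1} =
      SemidirectProduct.inl ''
        ((Subgroup.closure
          {v : Multiplicative (Fin ν → ℚ) | ∃ (n : ℤ) (a : Multiplicative (Fin ν → ℤ)),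
            v = Multiplicative.ofAdd
              ((T ^ n : (Fin ν → ℚ) ≃ₗ[ℚ] (Fin ν → ℚ)) (fun i => ((a.toAdd i : ℤ) : ℚ)))} :
          Subgroup (Multiplicative (Fin ν → ℚ))) : Set (Multiplicative (Fin ν → ℚ))) := by
  have hker : {g | modularMap (of (φ := τ)).range g = 1} = closure (tConjugates τ) :=
    Set.ext fun _ => modularMap_range_of_eq_one_iff τ hEm hEp hpq
  have hconj (n : ℤ) (a : Multiplicative (Fin ν → ℤ)) :
      Φ (t ^ n * of a * (t ^ n)⁻¹) =
        SemidirectProduct.inl (ofAdd ((T ^ n) fun i => ((a.toAdd i : ℤ) : ℚ))) := by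
    rw [map_mul, map_mul, map_inv, map_zpow, hΦt, hΦof, ← map_zpow, ← map_inv,
      ← SemidirectProduct.inl_aut]
    rfl
  have himage : Φ '' tConjugates τ = SemidirectProduct.inl ''
      {v | ∃ (n : ℤ) (a : Multiplicative (Fin ν → ℤ)),
        v = ofAdd ((T ^ n : (Fin ν → ℚ) ≃ₗ[ℚ] (Fin ν → ℚ)) fun i => ((a.toAdd i : ℤ) : ℚ))} := by
    ext x
    constructor
    · rintro ⟨_, ⟨n, a, rfl⟩, rfl⟩
      exact ⟨_, ⟨n, a, rfl⟩, (hconj n a).symm⟩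
    · rintro ⟨_, ⟨n, a, rfl⟩, rfl⟩
      exact ⟨_, ⟨n, a, rfl⟩, hconj n a⟩
  rw [hker, ← coe_map, ← coe_map, MonoidHom.map_closure, MonoidHom.map_closure, himage]

/-- With `G` the HNN extension of `E = ℤ^ν` along `τ : E₋ ≃ E₊` (of finite indices
`p = [E : E₋] ≠ q = [E : E₊]`), `m` the modular homomorphism associated to `E`, `N = ker m`,
and `φ : G → GL_ν(ℚ) ⋉ ℚ^ν` the homomorphism sending `E = ℤ^ν` into `ℚ^ν` and `t` to the
extension `T ∈ GL_ν(ℚ)` of `τ`, the image `φ(N)` equals the subgroup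
`H = ⋁_{n ∈ ℤ} Tⁿ(E)` of `ℚ^ν` generated by all `Tⁿ(E)`, `n ∈ ℤ`. -/
theorem image_ker_modular_eq (ν : ℕ)
    (Em Ep : Subgroup (Multiplicative (Fin ν → ℤ)))
    (hEm : Em.index ≠ 0) (hEp : Ep.index ≠ 0) (hpq : Em.index ≠ Ep.index)
    (τ : Em ≃* Ep)
    (T : (Fin ν → ℚ) ≃ₗ[ℚ] (Fin ν → ℚ))
    (hT : ∀ b : Em,
      T (fun i => (((b : Multiplicative (Fin ν → ℤ)).toAdd i : ℤ) : ℚ)) =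
        fun i => ((((τ b : Ep) : Multiplicative (Fin ν → ℤ)).toAdd i : ℤ) : ℚ))
    (Φ : HNNExtension (Multiplicative (Fin ν → ℤ)) Em Ep τ →*
        (Multiplicative (Fin ν → ℚ)) ⋊[glAct ν] ((Fin ν → ℚ) ≃ₗ[ℚ] (Fin ν → ℚ)))
    (hΦof : ∀ a : Multiplicative (Fin ν → ℤ),
      Φ (HNNExtension.of a) = SemidirectProduct.inl (intEmb ν a))
    (hΦt : Φ HNNExtension.t = SemidirectProduct.inr T) :
    Φ '' {g | modularMap (HNNExtension.of (φ := τ)).range g = 1} =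
      SemidirectProduct.inl ''
        ((Subgroup.closure
          {v : Multiplicative (Fin ν → ℚ) | ∃ (n : ℤ) (a : Multiplicative (Fin ν → ℤ)),
            v = Multiplicative.ofAdd
              ((T ^ n : (Fin ν → ℚ) ≃ₗ[ℚ] (Fin ν → ℚ)) (fun i => ((a.toAdd i : ℤ) : ℚ)))} :
          Subgroup (Multiplicative (Fin ν → ℚ))) : Set (Multiplicative (Fin ν → ℚ))) :=
  image_ker_modular_eq_general ν Em Ep hEm hEp hpq τ T Φ hΦof hΦt
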